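/- Let n ≥ 1 be an integer and let a₂, a₁, b₂, b₁ be real numbers. For j ∈ ℕ set λ_j = j(b₂ + (j−1)a₂), and assume b₁ + (j+2)a₁ ≠ 0 for every 0 ≤ j ≤ n−2. Define C₀ = 1 and, for 1 ≤ k ≤ n−1, C_k = (1/k!) · (∏_{j=0}^{k−1} (λ_n − λ_{j+1})) / (∏_{j=0}^{k−1} (b₁ + (j+2)a₁)). Then the polynomial function y(x) = Σ_{k=0}^{n−1} C_k x^{k+1} satisfies x²(a₂x + a₁)y''(x) + x(b₂x + b₁)y'(x) − (n(b₂ + (n−1)a₂)x + b₁)y(x) = 0 for all real x. -/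

import Mathlib

/-!
Each monomial `x^(k+1)` is mapped by the operator to `(λ_{k+1} - λ_n) x^(k+2) + k (b₁ + (k+1) a₁) x^(k+1)`,
so on `y = ∑ C_k x^(k+1)` the coefficient of `x^(k+2)` is
`C_k (λ_{k+1} - λ_n) + C_{k+1} (k+1) (b₁ + (k+2) a₁)`. The closed form of `C_k` is exactly the
solution of the recursion making these vanish; the lowest term carries the factor `k = 0` and
the highest the factor `λ_n - λ_n = 0`.
-/

open Finset

/-- The eigenvalue `λ_s`, taken at a real argument so that `λ_n` and `λ_{j+1}` appear verbatim
in the statement. -/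
def x1Eigenvalue (a2 b2 s : ℝ) : ℝ := s * (b2 + (s - 1) * a2)

theorem deriv_sum_mul_pow (s : Finset ℕ) (c : ℕ → ℝ) (e : ℕ → ℕ) :
    deriv (fun t : ℝ => ∑ k ∈ s, c k * t ^ e k) =
      fun t => ∑ k ∈ s, c k * e k * t ^ (e k - 1) := by
  funext t
  rw [deriv_fun_sum fun k _ => (differentiableAt_pow _).const_mul _]
  refine sum_congr rfl fun k _ => ?_
  rw [deriv_const_mul _ (differentiableAt_pow _), deriv_pow_field, mul_assoc]

theorem deriv_sum_mul_pow_succ (s : Finset ℕ) (c : ℕ → ℝ) :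
    deriv (fun t : ℝ => ∑ k ∈ s, c k * t ^ (k + 1)) =
      fun t => ∑ k ∈ s, c k * (k + 1) * t ^ k := by
  simp [deriv_sum_mul_pow]

theorem deriv_deriv_sum_mul_pow_succ (s : Finset ℕ) (c : ℕ → ℝ) :
    deriv (deriv fun t : ℝ => ∑ k ∈ s, c k * t ^ (k + 1)) =
      fun t => ∑ k ∈ s, c k * (k + 1) * k * t ^ (k - 1) := by
  rw [deriv_sum_mul_pow_succ, deriv_sum_mul_pow]

theorem x1Operator_monomial (a2 a1 b2 b1 μ x : ℝ) (k : ℕ) :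
    x ^ 2 * (a2 * x + a1) * ((k + 1) * k * x ^ (k - 1)) + x * (b2 * x + b1) * ((k + 1) * x ^ k)
        - (μ * x + b1) * x ^ (k + 1)
      = (x1Eigenvalue a2 b2 (k + 1) - μ) * x ^ (k + 2) + k * (b1 + (k + 1) * a1) * x ^ (k + 1) := by
  unfold x1Eigenvalue
  rcases k with _ | k
  · simp only [CharP.cast_eq_zero]
    ring
  · push_cast [Nat.add_sub_cancel, pow_succ]
    ring

theorem x1Operator_sum_mul_pow_succ (a2 a1 b2 b1 μ x : ℝ) (s : Finset ℕ) (c : ℕ → ℝ) :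
    x ^ 2 * (a2 * x + a1) * deriv (deriv fun t : ℝ => ∑ k ∈ s, c k * t ^ (k + 1)) x
        + x * (b2 * x + b1) * deriv (fun t : ℝ => ∑ k ∈ s, c k * t ^ (k + 1)) x
        - (μ * x + b1) * ∑ k ∈ s, c k * x ^ (k + 1)
      = ∑ k ∈ s, c k * ((x1Eigenvalue a2 b2 (k + 1) - μ) * x ^ (k + 2)
          + k * (b1 + (k + 1) * a1) * x ^ (k + 1)) := by
  rw [deriv_deriv_sum_mul_pow_succ, deriv_sum_mul_pow_succ, mul_sum, mul_sum, mul_sum,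
    ← sum_add_distrib, ← sum_sub_distrib]
  refine sum_congr rfl fun k _ => ?_
  rw [← x1Operator_monomial a2 a1 b2 b1 μ x k]
  ring

theorem sum_x1Operator_monomial_eq_zero (a2 a1 b2 b1 x : ℝ) (n : ℕ) (c : ℕ → ℝ)
    (hrec : ∀ k, k + 1 < n → c (k + 1) * ((k + 1) * (b1 + (k + 2) * a1))
      = c k * (x1Eigenvalue a2 b2 n - x1Eigenvalue a2 b2 (k + 1))) :
    ∑ k ∈ range n, c k * ((x1Eigenvalue a2 b2 (k + 1) - x1Eigenvalue a2 b2 n) * x ^ (k + 2)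
      + k * (b1 + (k + 1) * a1) * x ^ (k + 1)) = 0 := by
  rcases n with _ | m
  · simp
  simp only [mul_add, sum_add_distrib]
  rw [sum_range_succ, sum_range_succ' (fun k => c k * _)]
  push_cast at hrec ⊢
  simp only [sub_self, zero_mul, mul_zero, add_zero, ← sum_add_distrib]
  refine sum_eq_zero fun k hk => ?_
  linear_combination x ^ (k + 2) * hrec k (by simpa using hk)

theorem factorial_prod_div_prod_succ (u v : ℕ → ℝ) (k : ℕ) (hv : ∀ j ≤ k, v j ≠ 0) :
    1 / ((k + 1).factorial : ℝ) * (∏ j ∈ range (k + 1), u j) / (∏ j ∈ range (k + 1), v j)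
        * ((k + 1) * v k)
      = 1 / (k.factorial : ℝ) * (∏ j ∈ range k, u j) / (∏ j ∈ range k, v j) * u k := by
  have hprod : ∏ j ∈ range k, v j ≠ 0 :=
    prod_ne_zero_iff.mpr fun j hj => hv j (mem_range.mp hj).le
  have hvk := hv k le_rfl
  rw [prod_range_succ, prod_range_succ, Nat.factorial_succ]
  push_cast
  field_simp

theorem x1_special_case_polynomial_solution_general
    (a2 a1 b2 b1 : ℝ) (n : ℕ)
    (hden : ∀ j : ℕ, (j : ℤ) ≤ (n : ℤ) - 2 → b1 + ((j : ℝ) + 2) * a1 ≠ 0)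
    (C : ℕ → ℝ) (hC0 : C 0 = 1)
    (hCk : ∀ k : ℕ, 1 ≤ k → k ≤ n - 1 →
      C k = (1 / (Nat.factorial k : ℝ))
        * (∏ j ∈ Finset.range k,
            ((n : ℝ) * (b2 + ((n : ℝ) - 1) * a2)
              - ((j : ℝ) + 1) * (b2 + (((j : ℝ) + 1) - 1) * a2)))
        / (∏ j ∈ Finset.range k, (b1 + ((j : ℝ) + 2) * a1))) :
    ∀ x : ℝ,
      x ^ 2 * (a2 * x + a1) *
          deriv (deriv (fun t : ℝ => ∑ k ∈ Finset.range n, C k * t ^ (k + 1))) x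
        + x * (b2 * x + b1) *
          deriv (fun t : ℝ => ∑ k ∈ Finset.range n, C k * t ^ (k + 1)) x
        - ((n : ℝ) * (b2 + ((n : ℝ) - 1) * a2) * x + b1) *
          (∑ k ∈ Finset.range n, C k * x ^ (k + 1)) = 0 := by
  intro x
  have hC : ∀ k, k + 1 ≤ n → C k = 1 / (k.factorial : ℝ)
      * (∏ j ∈ range k, (x1Eigenvalue a2 b2 n - x1Eigenvalue a2 b2 (j + 1)))
      / ∏ j ∈ range k, (b1 + ((j : ℝ) + 2) * a1) := by
    intro k hk
    rcases k with _ | k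
    · simpa using hC0
    · exact hCk (k + 1) (by omega) (by omega)
  refine (x1Operator_sum_mul_pow_succ a2 a1 b2 b1 _ x _ C).trans
    (sum_x1Operator_monomial_eq_zero a2 a1 b2 b1 x n C fun k hk => ?_)
  rw [hC k hk.le, hC (k + 1) hk]
  exact factorial_prod_div_prod_succ _ (fun j => b1 + ((j : ℝ) + 2) * a1) k
    fun j hj => hden j (by omega)

/-- Explicit coefficients of the degree-`n` polynomial solution of the special exceptional
X₁ equation `x²(a₂x+a₁)y'' + x(b₂x+b₁)y' − (n(b₂+(n−1)a₂)x + b₁)y = 0`. -/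
theorem x1_special_case_polynomial_solution
    (a2 a1 b2 b1 : ℝ) (n : ℕ) (hn : 1 ≤ n)
    (hden : ∀ j : ℕ, (j : ℤ) ≤ (n : ℤ) - 2 → b1 + ((j : ℝ) + 2) * a1 ≠ 0)
    (C : ℕ → ℝ) (hC0 : C 0 = 1)
    (hCk : ∀ k : ℕ, 1 ≤ k → k ≤ n - 1 →
      C k = (1 / (Nat.factorial k : ℝ))
        * (∏ j ∈ Finset.range k,
            ((n : ℝ) * (b2 + ((n : ℝ) - 1) * a2)
              - ((j : ℝ) + 1) * (b2 + (((j : ℝ) + 1) - 1) * a2)))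
        / (∏ j ∈ Finset.range k, (b1 + ((j : ℝ) + 2) * a1))) :
    ∀ x : ℝ,
      x ^ 2 * (a2 * x + a1) *
          deriv (deriv (fun t : ℝ => ∑ k ∈ Finset.range n, C k * t ^ (k + 1))) x
        + x * (b2 * x + b1) *
          deriv (fun t : ℝ => ∑ k ∈ Finset.range n, C k * t ^ (k + 1)) x
        - ((n : ℝ) * (b2 + ((n : ℝ) - 1) * a2) * x + b1) *
          (∑ k ∈ Finset.range n, C k * x ^ (k + 1)) = 0 :=
  x1_special_case_polynomial_solution_general a2 a1 b2 b1 n hden C hC0 hCk
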